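/- arXiv:2301.05488 — 2 statements merged into one kernel-verified Lean document; each statement's English description precedes it below -/
import Mathlib

section
/- For any contraction T on a complex Hilbert space H (i.e., ‖T‖ ≤ 1), the block operator matrix [[T, √(1−TT*)], [√(1−T*T), −T*]] acting on H × H is unitary. -/
/-!
Write `U` for the block operator. Multiplying out, `U* U = 1` and `U U* = 1` reduce to the defining
identities `S² = 1 - TT*`, `R² = 1 - T*T` together with the intertwining relation `T R = S T`
(and its adjoint `R T* = T* S`). Since `T (1 - T*T) = (1 - TT*) T`, we have `T R² = S² T`, and
the relation follows by taking square roots: `[[0, T], [0, 0]]` commutes with `diag(S, R)²`,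
hence with its positive square root `diag(S, R)`.
-/

open ContinuousLinearMap

/-- The block operator `[[A, B], [C, D]]` acting on the Hilbert space direct sum
`H ×₂ H` (modelled as `WithLp 2 (H × H)`), sending `(x, y)` to `(Ax + By, Cx + Dy)`. -/
noncomputable def blockOp {H : Type*} [NormedAddCommGroup H] [InnerProductSpace ℂ H]
    (A B C D : H →L[ℂ] H) : WithLp 2 (H × H) →L[ℂ] WithLp 2 (H × H) :=
  ((WithLp.prodContinuousLinearEquiv 2 ℂ H H).symm :
      H × H →L[ℂ] WithLp 2 (H × H)) ∘L
    ((A ∘L ContinuousLinearMap.fst ℂ H H + B ∘L ContinuousLinearMap.snd ℂ H H).prod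
      (C ∘L ContinuousLinearMap.fst ℂ H H + D ∘L ContinuousLinearMap.snd ℂ H H)) ∘L
    ((WithLp.prodContinuousLinearEquiv 2 ℂ H H) :
      WithLp 2 (H × H) →L[ℂ] H × H)

open scoped ComplexOrder

section BlockOp

variable {H : Type*} [NormedAddCommGroup H] [InnerProductSpace ℂ H]

@[simp]
lemma blockOp_apply_fst (A B C D : H →L[ℂ] H) (x : WithLp 2 (H × H)) :
    (blockOp A B C D x).fst = A x.fst + B x.snd := rfl

@[simp]
lemma blockOp_apply_snd (A B C D : H →L[ℂ] H) (x : WithLp 2 (H × H)) :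
    (blockOp A B C D x).snd = C x.fst + D x.snd := rfl

lemma blockOp_inj {A B C D A' B' C' D' : H →L[ℂ] H} :
    blockOp A B C D = blockOp A' B' C' D' ↔ A = A' ∧ B = B' ∧ C = C' ∧ D = D' := by
  refine ⟨fun h => ?_, by rintro ⟨rfl, rfl, rfl, rfl⟩; rfl⟩
  have h₁ (v : H) := congr((($h (WithLp.toLp 2 (v, 0))).fst, ($h (WithLp.toLp 2 (v, 0))).snd))
  have h₂ (v : H) := congr((($h (WithLp.toLp 2 (0, v))).fst, ($h (WithLp.toLp 2 (0, v))).snd))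
  simp only [blockOp_apply_fst, blockOp_apply_snd, WithLp.toLp_fst, WithLp.toLp_snd, map_zero,
    add_zero, zero_add, Prod.mk.injEq] at h₁ h₂
  refine ⟨?_, ?_, ?_, ?_⟩ <;> ext v
  exacts [(h₁ v).1, (h₂ v).1, (h₁ v).2, (h₂ v).2]

lemma blockOp_mul (A B C D A' B' C' D' : H →L[ℂ] H) :
    blockOp A B C D * blockOp A' B' C' D' =
      blockOp (A * A' + B * C') (A * B' + B * D') (C * A' + D * C') (C * B' + D * D') := by
  ext x : 1
  rw [WithLp.ext_iff]
  ext <;>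
    simp only [mul_apply_eq_comp, WithLp.ofLp_fst, WithLp.ofLp_snd, blockOp_apply_fst,
      blockOp_apply_snd, map_add, add_apply] <;>
    abel

lemma blockOp_one : blockOp (1 : H →L[ℂ] H) 0 0 1 = 1 := by
  ext x : 1
  rw [WithLp.ext_iff]
  ext <;> simp

variable [CompleteSpace H]

lemma star_blockOp (A B C D : H →L[ℂ] H) :
    star (blockOp A B C D) = blockOp (star A) (star C) (star B) (star D) := by
  simp only [star_eq_adjoint]
  symm
  rw [eq_adjoint_iff]
  intro x y
  simp only [WithLp.prod_inner_apply, WithLp.ofLp_fst, WithLp.ofLp_snd, blockOp_apply_fst,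
    blockOp_apply_snd, inner_add_left, inner_add_right, adjoint_inner_left]
  ring

lemma ContinuousLinearMap.IsPositive.blockOp_diag {S R : H →L[ℂ] H} (hS : S.IsPositive)
    (hR : R.IsPositive) :
    (blockOp S 0 0 R).IsPositive := by
  rw [isPositive_iff']
  refine ⟨?_, fun x => ?_⟩
  · rw [IsSelfAdjoint, star_blockOp, star_zero, hS.isSelfAdjoint.star_eq, hR.isSelfAdjoint.star_eq]
  · simpa [WithLp.prod_inner_apply] using
      add_nonneg (hS.inner_nonneg_left x.fst) (hR.inner_nonneg_left x.snd)

end BlockOp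

lemma Commute.of_commute_mul_self {A : Type*} [CStarAlgebra A] [PartialOrder A]
    [StarOrderedRing A] {a b : A} (ha : 0 ≤ a) (h : Commute b (a * a)) : Commute b a := by
  rw [← CFC.sqrt_mul_self a]
  exact (h.symm.cfcₙ_nnreal _).symm

lemma mul_eq_mul_of_mul_mul_self_eq {H : Type*} [NormedAddCommGroup H] [InnerProductSpace ℂ H]
    [CompleteSpace H] {T S R : H →L[ℂ] H} (hS : S.IsPositive) (hR : R.IsPositive)
    (h : T * (R * R) = S * S * T) : T * R = S * T := by
  have hE : 0 ≤ blockOp S 0 0 R := (nonneg_iff_isPositive _).mpr (hS.blockOp_diag hR)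
  have hsq : Commute (blockOp 0 T 0 0) (blockOp S 0 0 R * blockOp S 0 0 R) := by
    simp [Commute, SemiconjBy, blockOp_mul, h, mul_assoc]
  have hcomm := (Commute.of_commute_mul_self hE hsq).eq
  simp only [blockOp_mul, blockOp_inj] at hcomm
  simpa using hcomm.2.1

theorem szNagy_block_unitary_general
    {H : Type*} [NormedAddCommGroup H] [InnerProductSpace ℂ H] [CompleteSpace H]
    (T S R : H →L[ℂ] H)
    (hS : S.IsPositive) (hS2 : S ∘L S = 1 - T ∘L adjoint T)
    (hR : R.IsPositive) (hR2 : R ∘L R = 1 - adjoint T ∘L T) :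
    blockOp T S R (-(adjoint T)) ∈
      unitary (WithLp 2 (H × H) →L[ℂ] WithLp 2 (H × H)) := by
  rw [← star_eq_adjoint] at hS2 hR2 ⊢
  change S * S = 1 - T * star T at hS2
  change R * R = 1 - star T * T at hR2
  have hTR : T * R = S * T := mul_eq_mul_of_mul_mul_self_eq hS hR (by
    rw [hR2, hS2]; noncomm_ring)
  have hRT : R * star T = star T * S := by
    simpa [hS.isSelfAdjoint.star_eq, hR.isSelfAdjoint.star_eq] using congr(star $hTR)
  rw [Unitary.mem_iff, star_blockOp, blockOp_mul, blockOp_mul, ← blockOp_one, blockOp_inj,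
    blockOp_inj]
  simp only [star_neg, star_star, hS.isSelfAdjoint.star_eq, hR.isSelfAdjoint.star_eq]
  refine ⟨⟨?_, ?_, ?_, ?_⟩, ?_, ?_, ?_, ?_⟩ <;>
    simp only [neg_mul, mul_neg, neg_neg, hS2, hR2, hTR, hRT] <;> abel

/-- Sz.-Nagy: for any contraction `T` on a complex Hilbert space `H`
(`‖T‖ ≤ 1`), the block operator `[[T, √(1−TT*)], [√(1−T*T), −T*]]` on `H × H` is unitary.
The square roots are encoded as the (unique) positive operators `S`, `R` with
`S² = 1 − TT*` and `R² = 1 − T*T`. -/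
theorem szNagy_block_unitary
    {H : Type*} [NormedAddCommGroup H] [InnerProductSpace ℂ H] [CompleteSpace H]
    (T S R : H →L[ℂ] H) (hT : ‖T‖ ≤ 1)
    (hS : S.IsPositive) (hS2 : S ∘L S = 1 - T ∘L adjoint T)
    (hR : R.IsPositive) (hR2 : R ∘L R = 1 - adjoint T ∘L T) :
    blockOp T S R (-(adjoint T)) ∈
      unitary (WithLp 2 (H × H) →L[ℂ] WithLp 2 (H × H)) :=
  szNagy_block_unitary_general T S R hS hS2 hR hR2
end

section
/- Let M be a closed subspace of a complex Hilbert space H and V₀ : M → H a linear isometry. Then there exists a unitary operator U on H ⊗ ℂ² such that U(x ⊗ e₁) = (V₀ x) ⊗ e₁ for all x ∈ M, where e₁ is the first standard basis vector of ℂ². -/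
/-!
Extending `V₀` by zero on `Mᗮ` gives an operator `T` on `H` with `T† T` the orthogonal projection
onto `M`, hence a partial isometry: `T T† T = T`. For a partial isometry `a` of any star ring the
block matrix `[[a, 1 - a a⋆], [1 - a⋆ a, -a⋆]]` is unitary. Realised on `H ⊕ H`, this block
operator sends `(x, 0)` to `(T x, x - T† T x) = (V₀ x, 0)` for `x ∈ M`.
-/

section HalmosDilation

variable {R : Type*} [Ring R] [StarRing R]

theorem Matrix.star_fin_two (a b c d : R) :
    star !![a, b; c, d] = !![star a, star c; star b, star d] := by
  ext i j; fin_cases i <;> fin_cases j <;> rfl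

/-- Halmos' unitary dilation `[[a, √(1 - a a⋆)], [√(1 - a⋆ a), -a⋆]]`, specialised to partial
isometries, whose defect operators `1 - a a⋆` and `1 - a⋆ a` are projections. -/
def Matrix.halmosDilation (a : R) : Matrix (Fin 2) (Fin 2) R :=
  !![a, 1 - a * star a; 1 - star a * a, -star a]

theorem Matrix.halmosDilation_mem_unitary {a : R} (ha : a * star a * a = a) :
    Matrix.halmosDilation a ∈ unitary (Matrix (Fin 2) (Fin 2) R) := by
  have ha' : star a * a * star a = star a := by
    simpa [mul_assoc] using congrArg star ha
  rw [Matrix.halmosDilation, Unitary.mem_iff, Matrix.star_fin_two, Matrix.mul_fin_two,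
    Matrix.mul_fin_two, Matrix.one_fin_two]
  simp [mul_sub, sub_mul, ← mul_assoc, ha, ha']

end HalmosDilation

section BlockOperator

open ContinuousLinearMap

variable {𝕜 E : Type*} [RCLike 𝕜] [NormedAddCommGroup E] [InnerProductSpace 𝕜 E]
  [CompleteSpace E]

noncomputable def Matrix.toProdL2 :
    Matrix (Fin 2) (Fin 2) (E →L[𝕜] E) →⋆* (WithLp 2 (E × E) →L[𝕜] WithLp 2 (E × E)) where
  toFun A := (WithLp.prodContinuousLinearEquiv 2 𝕜 E E).symm.conjContinuousAlgEquiv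
    (((A 0 0).coprod (A 0 1)).prod ((A 1 0).coprod (A 1 1)))
  map_one' := by
    rw [← map_one (WithLp.prodContinuousLinearEquiv 2 𝕜 E E).symm.conjContinuousAlgEquiv]
    congr 1
    ext <;> simp
  map_mul' A B := by
    simp only [← map_mul]
    congr 1
    ext <;> simp [Matrix.mul_apply, Fin.sum_univ_two]
  map_star' A := by
    refine (eq_adjoint_iff _ _).mpr fun x y => ?_
    simp only [Fin.isValue, Matrix.star_apply, star_eq_adjoint,
      ContinuousLinearEquiv.conjContinuousAlgEquiv_apply_apply, ContinuousLinearEquiv.symm_symm,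
      WithLp.prodContinuousLinearEquiv_apply, WithLp.prodContinuousLinearEquiv_symm_apply,
      prod_apply, coprod_apply, WithLp.ofLp_fst, WithLp.ofLp_snd, WithLp.prod_inner_apply,
      inner_add_left, inner_add_right, adjoint_inner_left]
    ring

theorem Matrix.toProdL2_apply (A : Matrix (Fin 2) (Fin 2) (E →L[𝕜] E)) (x y : E) :
    Matrix.toProdL2 A (WithLp.toLp 2 (x, y)) =
      WithLp.toLp 2 (A 0 0 x + A 0 1 y, A 1 0 x + A 1 1 y) :=
  rfl

end BlockOperator

section ExtendByZero

open ContinuousLinearMap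

variable {𝕜 E F : Type*} [RCLike 𝕜] [NormedAddCommGroup E] [InnerProductSpace 𝕜 E]
  [NormedAddCommGroup F] [InnerProductSpace 𝕜 F]

theorem Submodule.orthogonalProjectionOnto_comp_subtypeL (K : Submodule 𝕜 F)
    [K.HasOrthogonalProjection] :
    K.orthogonalProjectionOnto ∘L K.subtypeL = ContinuousLinearMap.id 𝕜 K := by
  ext x
  simp [orthogonalProjectionOnto_mem_subspace_eq_self]

namespace LinearIsometry

noncomputable def extendByZero {K : Submodule 𝕜 F} [K.HasOrthogonalProjection]
    (V : K →ₗᵢ[𝕜] E) : F →L[𝕜] E :=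
  V.toContinuousLinearMap ∘L K.orthogonalProjectionOnto

theorem extendByZero_apply_coe {K : Submodule 𝕜 F} [K.HasOrthogonalProjection]
    (V : K →ₗᵢ[𝕜] E) (x : K) : V.extendByZero x = V x := by
  simp [extendByZero, Submodule.orthogonalProjectionOnto_mem_subspace_eq_self]

variable [CompleteSpace E] [CompleteSpace F] {K : Submodule 𝕜 F} [CompleteSpace K]

theorem adjoint_extendByZero_comp_self (V : K →ₗᵢ[𝕜] E) :
    adjoint V.extendByZero ∘L V.extendByZero = K.starProjection := by
  rw [extendByZero, adjoint_comp]
  simp only [ContinuousLinearMap.comp_assoc]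
  rw [← ContinuousLinearMap.comp_assoc _ V.toContinuousLinearMap, V.adjoint_comp_self,
    K.adjoint_orthogonalProjectionOnto]
  rfl

theorem extendByZero_comp_adjoint_comp_self (V : K →ₗᵢ[𝕜] E) :
    V.extendByZero ∘L adjoint V.extendByZero ∘L V.extendByZero = V.extendByZero := by
  rw [adjoint_extendByZero_comp_self, extendByZero, Submodule.starProjection]
  simp only [ContinuousLinearMap.comp_assoc]
  rw [← ContinuousLinearMap.comp_assoc K.orthogonalProjectionOnto,
    K.orthogonalProjectionOnto_comp_subtypeL]
  rfl

end LinearIsometry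

end ExtendByZero

/-- Lemma 1: let `M` be a closed subspace of a complex Hilbert space `H` and
`V₀ : M → H` a linear isometry.  Then there is a unitary `U` on `H ⊗ ℂ²` extending `V₀` in
the sense that `U (x ⊗ e₁) = (V₀ x) ⊗ e₁` for all `x ∈ M`.  Here `H ⊗ ℂ²` is modelled as
the Hilbert space direct sum `WithLp 2 (H × H)` (isometrically isomorphic to the Hilbert
tensor product `H ⊗ ℂ²` via `x ⊗ e₁ + y ⊗ e₂ ↦ (x, y)`), so that `x ⊗ e₁ = (x, 0)`. -/
theorem isometry_extends_to_unitary_qubit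
    {H : Type*} [NormedAddCommGroup H] [InnerProductSpace ℂ H] [CompleteSpace H]
    (M : Submodule ℂ H) (hM : IsClosed (M : Set H))
    (V₀ : M →ₗᵢ[ℂ] H) :
    ∃ U ∈ unitary (WithLp 2 (H × H) →L[ℂ] WithLp 2 (H × H)),
      ∀ x : M,
        U ((WithLp.equiv 2 (H × H)).symm ((x : H), 0))
          = (WithLp.equiv 2 (H × H)).symm (V₀ x, 0) := by
  have : CompleteSpace M := hM.completeSpace_coe
  set T := V₀.extendByZero
  have hT : T * star T * T = T := by
    rw [mul_assoc]
    exact V₀.extendByZero_comp_adjoint_comp_self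
  refine ⟨Matrix.toProdL2 (Matrix.halmosDilation T),
    Unitary.map_mem _ (Matrix.halmosDilation_mem_unitary hT), fun x => ?_⟩
  have hTx : T x = V₀ x := V₀.extendByZero_apply_coe x
  have hx : star T (V₀ x) = x := by
    rw [← hTx, ContinuousLinearMap.star_eq_adjoint, ← ContinuousLinearMap.comp_apply,
      V₀.adjoint_extendByZero_comp_self, M.starProjection_mem_subspace_eq_self]
  simp [Matrix.toProdL2_apply, Matrix.halmosDilation, hx, hTx]
end
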